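/- Let n ≥ 2, A > 0 and p ∈ (1,2). Let ψ : [0,A] → [0,∞) be continuous, twice continuously differentiable on (0,A), strictly increasing with ψ′ increasing on (0,A), and suppose there is C > 1 with (1/C)·x^p ≤ ψ(x) ≤ C·x^p for all x ∈ [0,A]. Write D := { z = (z′,z_n) ∈ ℂ^{n−1} × ℂ : 0 < Re z_n < A and (Im z_n)² + ‖z′‖² < ψ(Re z_n)² }, α := 1/(p−1), and let ψ⁻¹ : [0,ψ(A)] → [0,A] be the inverse of ψ. Then there exist constants a, h, B > 0 and a compact set K ⊆ { z ∈ ℂⁿ : Re z_n ≤ A } intersecting { z : Re z_n = A } and with K ∖ { z : Re z_n = A } ⊆ D, such that for every w′ ∈ ℂ^{n−1} with ‖w′‖ < ψ(B/2) and every ζ ∈ ℂ with (w′,ζ) ∈ D and Re ζ ≤ B, writing S := √( (Im ζ)² + ‖w′‖² ): (1) for every q ∈ 𝒬^{α,a,h}, the point ( w′, ψ⁻¹(S) + i·Im ζ + q ) belongs to D; (2) ψ⁻¹(S) + o_{α,a,h} > Re ζ; (3) ( w′, ψ⁻¹(S) + i·Im ζ + o_{α,a,h} ) ∈ K; and (4)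 dist( (w′,ζ), ℂⁿ ∖ D ) ≤ | Re ζ − ψ⁻¹(S) |. -/

import Mathlib

/-- The half-strip `S_{a,h} = { z ∈ ℂ : Re z > a, −h < Im z < h }`. -/
def halfStrip (a h : ℝ) : Set ℂ := {z : ℂ | a < z.re ∧ -h < z.im ∧ z.im < h}

/-- The region `T_{a,h} = { 1/z : z ∈ S_{a,h} }`. -/
def Tregion (a h : ℝ) : Set ℂ := (fun z : ℂ => z⁻¹) '' halfStrip a h

/-- The comparison domain `𝒬^{α,a,h} = { z^α : z ∈ T_{a,h} }` (principal branch). -/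
noncomputable def Qregion (α a h : ℝ) : Set ℂ := (fun z : ℂ => z ^ (α : ℂ)) '' Tregion a h

/-- The base point `o_{α,a,h} = ((2h/π)·log(1+√2) + a)^{−α}` of display (6.3) of the paper. -/
noncomputable def basePt (α a h : ℝ) : ℝ :=
  ((2 * h / Real.pi) * Real.log (1 + Real.sqrt 2) + a) ^ (-α)

/-- `ℂⁿ` split as `ℂ^{n-1} × ℂ`, with the Euclidean (`L²`) norm. -/
abbrev CSplit (n : ℕ) := WithLp 2 (EuclideanSpace ℂ (Fin (n - 1)) × ℂ)

/-- The spike `D = { (z′,z_n) : 0 < Re z_n < A, (Im z_n)² + ‖z′‖² < ψ(Re z_n)² }`. -/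
def spikeDomain (n : ℕ) (A : ℝ) (ψ : ℝ → ℝ) : Set (CSplit n) :=
  {z : CSplit n | 0 < z.ofLp.2.re ∧ z.ofLp.2.re < A ∧ z.ofLp.2.im ^ 2 + ‖z.ofLp.1‖ ^ 2 < (ψ z.ofLp.2.re) ^ 2}

open Real in
/-- For a complex number in the right half plane, `|arg z| ≤ |Im z| / Re z`. -/
lemma SpikeAux.arg_abs_le {z : ℂ} (hz : 0 < z.re) : |z.arg| ≤ |z.im| / z.re := by
  have h2 : |z.arg| < π/2 := Complex.abs_arg_lt_pi_div_two_iff.mpr (Or.inl hz)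
  have h2' := abs_lt.mp h2
  have h3 : |z.arg| ≤ Real.tan |z.arg| := Real.le_tan (abs_nonneg _) h2
  have h4 : Real.tan |z.arg| = |Real.tan z.arg| := by
    rcases le_or_gt 0 z.arg with h | h
    · rw [abs_of_nonneg h,
        abs_of_nonneg (Real.tan_nonneg_of_nonneg_of_le_pi_div_two h h2'.2.le)]
    · rw [abs_of_neg h, Real.tan_neg,
        abs_of_nonpos (Real.tan_nonpos_of_nonpos_of_neg_pi_div_two_le h.le h2'.1.le)]
  calc |z.arg| ≤ |Real.tan z.arg| := h3.trans_eq h4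
    _ = |z.im| / z.re := by rw [Complex.tan_arg, abs_div, abs_of_pos hz]

open Real in
/-- Quantitative bounds for elements of `Qregion α a h`. -/
lemma SpikeAux.qbounds {α a h : ℝ} (hα : 1 ≤ α) (ha1 : 1 ≤ a) (haα : α ≤ a)
    (hh0 : 0 < h) (hh1 : h ≤ 1) {q : ℂ} (hq : q ∈ Qregion α a h) :
    ∃ r : ℝ, 0 < r ∧ r < a⁻¹ ∧ r ^ α / 2 ≤ q.re ∧ q.re ≤ r ^ α ∧
      |q.im| ≤ Real.sqrt 2 * α * h * r ^ (α + 1) := by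
  obtain ⟨w, ⟨z, hz, rfl⟩, rfl⟩ := hq
  obtain ⟨hza, hzim1, hzim2⟩ := hz
  have hα0 : (0:ℝ) < α := lt_of_lt_of_le one_pos hα
  have ha0 : (0:ℝ) < a := lt_of_lt_of_le one_pos ha1
  have hzre : 0 < z.re := ha0.trans hza
  have hz0 : z ≠ 0 := fun hz0 => by simp [hz0] at hzre
  have hw0 : z⁻¹ ≠ 0 := inv_ne_zero hz0
  set m : ℝ := ‖z‖ with hm_def
  have hm0 : 0 < m := norm_pos_iff.mpr hz0
  have hum : z.re ≤ m := Complex.re_le_norm z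
  have hvh : |z.im| ≤ h := abs_le.mpr ⟨hzim1.le, hzim2.le⟩
  have hm2 : m ≤ Real.sqrt 2 * z.re := by
    have hmsq : m ^ 2 = z.re ^ 2 + z.im ^ 2 := by
      rw [Complex.sq_norm, Complex.normSq_apply]; ring
    have him : z.im ^ 2 ≤ z.re ^ 2 := by
      have h5 : |z.im| ≤ z.re := hvh.trans (hh1.trans (ha1.trans hza.le))
      nlinarith [abs_nonneg z.im, sq_abs z.im]
    have h7 : m = Real.sqrt (m ^ 2) := (Real.sqrt_sq hm0.le).symm
    rw [h7, hmsq]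
    have h8 : z.re ^ 2 + z.im ^ 2 ≤ 2 * z.re ^ 2 := by linarith
    calc Real.sqrt (z.re ^ 2 + z.im ^ 2) ≤ Real.sqrt (2 * z.re ^ 2) :=
          Real.sqrt_le_sqrt h8
      _ = Real.sqrt 2 * z.re := by
          rw [Real.sqrt_mul (by norm_num : (0:ℝ) ≤ 2), Real.sqrt_sq hzre.le]
  set r : ℝ := m⁻¹ with hr_def
  have hr0 : 0 < r := inv_pos.mpr hm0
  have hrm : r * m = 1 := inv_mul_cancel₀ hm0.ne'
  have hra : r < a⁻¹ := inv_strictAnti₀ ha0 (hza.trans_le hum)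
  set θ : ℝ := Complex.arg z⁻¹ with hθ_def
  have hθabs : |θ| = |z.arg| := Complex.abs_arg_inv z
  have hargz : |θ| ≤ h / z.re := by
    rw [hθabs]
    exact (SpikeAux.arg_abs_le hzre).trans ((div_le_div_iff_of_pos_right hzre).mpr hvh)
  have hθre : |θ| * z.re ≤ h := (le_div_iff₀ hzre).mp hargz
  have hθ1 : |θ| * α ≤ 1 := by
    have h6 : |θ| * α * z.re ≤ 1 * z.re := by
      nlinarith [abs_nonneg θ, mul_le_mul_of_nonneg_left hθre hα0.le]
    exact le_of_mul_le_mul_right (by linarith) hzre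
  -- compute real and imaginary parts of the power
  have habsinv : ‖z⁻¹‖ = r := by rw [norm_inv]
  have hmulre : (Complex.log z⁻¹ * (α:ℂ)).re = Real.log r * α := by
    rw [Complex.mul_re, Complex.log_re, Complex.log_im, habsinv]; simp
  have hmulim : (Complex.log z⁻¹ * (α:ℂ)).im = θ * α := by
    simp [Complex.mul_im, Complex.log_re, Complex.log_im, hθ_def]
  have hexp : Real.exp (Real.log r * α) = r ^ α := (Real.rpow_def_of_pos hr0 α).symm
  have hre : ((z⁻¹) ^ (α:ℂ)).re = r ^ α * Real.cos (θ * α) := by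
    rw [Complex.cpow_def_of_ne_zero hw0, Complex.exp_re, hmulre, hmulim, hexp]
  have him : ((z⁻¹) ^ (α:ℂ)).im = r ^ α * Real.sin (θ * α) := by
    rw [Complex.cpow_def_of_ne_zero hw0, Complex.exp_im, hmulre, hmulim, hexp]
  have hrα : (0:ℝ) ≤ r ^ α := Real.rpow_nonneg hr0.le α
  have hcos : 1/2 ≤ Real.cos (θ * α) := by
    have hb := Real.one_sub_sq_div_two_le_cos (x := θ * α)
    have habs1 : |θ * α| ≤ 1 := by rw [abs_mul, abs_of_pos hα0]; exact hθ1
    have hsq1 : (θ * α) ^ 2 ≤ 1 := by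
      calc (θ * α) ^ 2 = |θ * α| ^ 2 := (sq_abs _).symm
        _ ≤ 1 ^ 2 := pow_le_pow_left₀ (abs_nonneg _) habs1 2
        _ = 1 := one_pow 2
    linarith
  refine ⟨r, hr0, hra, ?_, ?_, ?_⟩
  · rw [hre]
    calc r ^ α / 2 = r ^ α * (1/2) := by ring
      _ ≤ r ^ α * Real.cos (θ * α) := mul_le_mul_of_nonneg_left hcos hrα
  · rw [hre]
    calc r ^ α * Real.cos (θ * α) ≤ r ^ α * 1 :=
          mul_le_mul_of_nonneg_left (Real.cos_le_one _) hrα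
      _ = r ^ α := mul_one _
  · rw [him, abs_mul, abs_of_nonneg hrα]
    have hsin : |Real.sin (θ * α)| ≤ |θ| * α := by
      calc |Real.sin (θ * α)| ≤ |θ * α| := Real.abs_sin_le_abs
        _ = |θ| * α := by rw [abs_mul, abs_of_pos hα0]
    have hc2 : |θ| ≤ Real.sqrt 2 * h * r := by
      have hb1 : |θ| * m ≤ |θ| * (Real.sqrt 2 * z.re) :=
        mul_le_mul_of_nonneg_left hm2 (abs_nonneg θ)
      have hb2 : r * (|θ| * m) ≤ r * (|θ| * (Real.sqrt 2 * z.re)) :=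
        mul_le_mul_of_nonneg_left hb1 hr0.le
      have hb3 : Real.sqrt 2 * r * (|θ| * z.re) ≤ Real.sqrt 2 * r * h :=
        mul_le_mul_of_nonneg_left hθre (mul_nonneg (Real.sqrt_nonneg 2) hr0.le)
      nlinarith [hrm, abs_nonneg θ]
    calc r ^ α * |Real.sin (θ * α)| ≤ r ^ α * (|θ| * α) :=
          mul_le_mul_of_nonneg_left hsin hrα
      _ ≤ r ^ α * (Real.sqrt 2 * h * r * α) := by
          apply mul_le_mul_of_nonneg_left _ hrα
          exact mul_le_mul_of_nonneg_right hc2 hα0.le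
      _ = Real.sqrt 2 * α * h * r ^ (α + 1) := by
          rw [Real.rpow_add_one hr0.ne']; ring

/-- Convex functions vanishing at `0` are superadditive. -/
lemma SpikeAux.superadd {A : ℝ} {ψ : ℝ → ℝ} (hA : 0 ≤ A)
    (hconv : ConvexOn ℝ (Set.Icc 0 A) ψ) (hψ0 : ψ 0 = 0) {x t : ℝ}
    (hx : 0 ≤ x) (ht : 0 ≤ t) (hxt : x + t ≤ A) : ψ x + ψ t ≤ ψ (x + t) := by
  rcases eq_or_lt_of_le (add_nonneg hx ht) with hs | hs
  · have hx0 : x = 0 := by linarith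
    have ht0 : t = 0 := by linarith
    simp [hx0, ht0, hψ0]
  · have hmem : x + t ∈ Set.Icc (0:ℝ) A := ⟨add_nonneg hx ht, hxt⟩
    have h0mem : (0:ℝ) ∈ Set.Icc (0:ℝ) A := ⟨le_rfl, hA⟩
    have hab : x / (x + t) + t / (x + t) = 1 := by field_simp
    have l1 := hconv.2 hmem h0mem (div_nonneg hx hs.le) (div_nonneg ht hs.le) hab
    have l2 := hconv.2 h0mem hmem (div_nonneg hx hs.le) (div_nonneg ht hs.le)
      (by rw [add_comm] at hab ⊢; exact hab)
    simp only [smul_eq_mul, mul_zero, add_zero, zero_add, hψ0] at l1 l2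
    have e1 : x / (x + t) * (x + t) = x := by field_simp
    have e2 : t / (x + t) * (x + t) = t := by field_simp
    rw [e1] at l1
    rw [e2] at l2
    have := add_le_add l1 l2
    calc ψ x + ψ t ≤ x / (x + t) * ψ (x + t) + t / (x + t) * ψ (x + t) := this
      _ = ψ (x + t) := by field_simp

set_option maxHeartbeats 1000000 in
/-- Lemma 6.3 of the paper. Let `n ≥ 2`, `A > 0`, `p ∈ (1,2)`, and let
`ψ : [0,A] → [0,∞)` be continuous, `C²` on `(0,A)`, strictly increasing with increasing
derivative, and comparable to `x^p`. With `α = 1/(p−1)` and `φ = ψ⁻¹`, there exist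
`a, h, B > 0` and a compact set `K ⊆ {Re z_n ≤ A}` intersecting `{Re z_n = A}` with
`K ∖ {Re z_n = A} ⊆ D`, such that for every `w′` with `‖w′‖ < ψ(B/2)` and every `ζ`
with `(w′,ζ) ∈ D` and `Re ζ ≤ B`, writing `S = √((Im ζ)² + ‖w′‖²)`:
(1) `(w′, ψ⁻¹(S) + i·Im ζ + 𝒬^{α,a,h}) ⊆ D`; (2) `ψ⁻¹(S) + o_{α,a,h} > Re ζ`;
(3) `(w′, ψ⁻¹(S) + i·Im ζ + o_{α,a,h}) ∈ K`; (4) `dist((w′,ζ), ℂⁿ ∖ D) ≤ |Re ζ − ψ⁻¹(S)|`. -/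
theorem spike_embedding (n : ℕ) (hn : 2 ≤ n) (A p C : ℝ) (hA : 0 < A)
    (hp : p ∈ Set.Ioo (1 : ℝ) 2) (hC : 1 < C) (ψ φ : ℝ → ℝ)
    (hψcont : ContinuousOn ψ (Set.Icc 0 A))
    (hψC2 : ContDiffOn ℝ 2 ψ (Set.Ioo 0 A))
    (hψmono : StrictMonoOn ψ (Set.Icc 0 A))
    (hψ'mono : MonotoneOn (deriv ψ) (Set.Ioo 0 A))
    (hψbound : ∀ x ∈ Set.Icc (0 : ℝ) A, (1 / C) * x ^ p ≤ ψ x ∧ ψ x ≤ C * x ^ p)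
    (hφ : ∀ x ∈ Set.Icc (0 : ℝ) A, φ (ψ x) = x) :
    ∃ a > (0 : ℝ), ∃ h > (0 : ℝ), ∃ B > (0 : ℝ), ∃ K : Set (CSplit n),
      IsCompact K ∧ K ⊆ {z : CSplit n | z.ofLp.2.re ≤ A} ∧
      (K ∩ {z : CSplit n | z.ofLp.2.re = A}).Nonempty ∧
      K \ {z : CSplit n | z.ofLp.2.re = A} ⊆ spikeDomain n A ψ ∧
      ∀ w' : EuclideanSpace ℂ (Fin (n - 1)), ‖w'‖ < ψ (B / 2) →
        ∀ ζ : ℂ, (WithLp.equiv 2 _).symm (w', ζ) ∈ spikeDomain n A ψ → ζ.re ≤ B →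
          (∀ q ∈ Qregion (1 / (p - 1)) a h,
            (WithLp.equiv 2 _).symm
              (w', ((φ (Real.sqrt (ζ.im ^ 2 + ‖w'‖ ^ 2)) : ℝ) : ℂ)
                + (ζ.im : ℂ) * Complex.I + q) ∈ spikeDomain n A ψ) ∧
          ζ.re < φ (Real.sqrt (ζ.im ^ 2 + ‖w'‖ ^ 2)) + basePt (1 / (p - 1)) a h ∧
          (WithLp.equiv 2 _).symm
              (w', ((φ (Real.sqrt (ζ.im ^ 2 + ‖w'‖ ^ 2)) : ℝ) : ℂ)
                + (ζ.im : ℂ) * Complex.I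
                + ((basePt (1 / (p - 1)) a h : ℝ) : ℂ)) ∈ K ∧
          Metric.infDist ((WithLp.equiv 2 _).symm (w', ζ)) (spikeDomain n A ψ)ᶜ
            ≤ |ζ.re - φ (Real.sqrt (ζ.im ^ 2 + ‖w'‖ ^ 2))| := by
  obtain ⟨hp1, hp2⟩ := hp
  have hp0 : (0:ℝ) < p - 1 := by linarith
  have hC0 : (0:ℝ) < C := by linarith
  set α : ℝ := 1 / (p - 1) with hαdef
  have hα1 : 1 < α := one_lt_one_div hp0 (by linarith)
  have hα0 : (0:ℝ) < α := by linarith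
  have hαp : α * p = α + 1 := by rw [hαdef]; field_simp; ring
  -- parameters
  set a : ℝ := max 1 (max α (2/A)) with hadef
  have ha1 : (1:ℝ) ≤ a := le_max_left _ _
  have haα : α ≤ a := le_trans (le_max_left _ _) (le_max_right _ _)
  have haA : 2/A ≤ a := le_trans (le_max_right _ _) (le_max_right _ _)
  have ha0 : (0:ℝ) < a := lt_of_lt_of_le one_pos ha1
  have h2p : (0:ℝ) < 2 ^ p := Real.rpow_pos_of_pos two_pos p
  have hden : (0:ℝ) < α * C * 2 ^ (p+1) := by positivity
  set h : ℝ := min 1 (1/(α * C * 2 ^ (p+1))) with hhdef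
  have hh0 : (0:ℝ) < h := lt_min one_pos (by positivity)
  have hh1 : h ≤ 1 := min_le_left _ _
  have hh2 : h ≤ 1/(α * C * 2 ^ (p+1)) := min_le_right _ _
  -- the base point
  set o : ℝ := basePt α a h with hodef
  have hbase : a ≤ (2 * h / Real.pi) * Real.log (1 + Real.sqrt 2) + a := by
    have hlog : 0 ≤ Real.log (1 + Real.sqrt 2) :=
      Real.log_nonneg (by nlinarith [Real.sqrt_nonneg 2])
    have : 0 ≤ (2 * h / Real.pi) * Real.log (1 + Real.sqrt 2) := by positivity
    linarith
  have hbase0 : (0:ℝ) < (2 * h / Real.pi) * Real.log (1 + Real.sqrt 2) + a :=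
    lt_of_lt_of_le ha0 hbase
  have ho0 : 0 < o := Real.rpow_pos_of_pos hbase0 _
  have hoa : o ≤ a ^ (-α) :=
    Real.rpow_le_rpow_of_nonpos ha0 hbase (neg_nonpos.mpr hα0.le)
  have haA2 : a ^ (-α) ≤ A/2 := by
    have h1 : a ≤ a ^ α := by
      calc a = a ^ (1:ℝ) := (Real.rpow_one a).symm
        _ ≤ a ^ α := Real.rpow_le_rpow_of_exponent_le ha1 hα1.le
    have h2 : 2/A ≤ a ^ α := haA.trans h1
    have hA2 : (0:ℝ) < 2/A := by positivity
    rw [Real.rpow_neg ha0.le]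
    calc (a ^ α)⁻¹ ≤ (2/A)⁻¹ := by
          apply inv_anti₀ hA2 h2
      _ = A/2 := by rw [inv_div]
  have hoA2 : o ≤ A/2 := hoa.trans haA2
  set B : ℝ := min (A/4) (o/2) with hBdef
  have hB0 : (0:ℝ) < B := lt_min (by linarith) (by linarith)
  have hBA4 : B ≤ A/4 := min_le_left _ _
  have hBo : B ≤ o/2 := min_le_right _ _
  have hBA : B ≤ A := by linarith
  -- facts about ψ
  have hψ0 : ψ 0 = 0 := by
    obtain ⟨hb1, hb2⟩ := hψbound 0 ⟨le_rfl, hA.le⟩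
    rw [Real.zero_rpow (by linarith : (0:ℝ) < p).ne'] at hb1 hb2
    simp only [mul_zero] at hb1 hb2
    linarith
  have hψpos : ∀ x, 0 < x → x ≤ A → 0 < ψ x := fun x hx hxA =>
    lt_of_lt_of_le (by positivity) (hψbound x ⟨hx.le, hxA⟩).1
  have hψnn : ∀ x ∈ Set.Icc (0:ℝ) A, 0 ≤ ψ x := fun x hx =>
    le_trans (mul_nonneg (by positivity) (Real.rpow_nonneg hx.1 p)) (hψbound x hx).1
  have hmono : MonotoneOn ψ (Set.Icc 0 A) := hψmono.monotoneOn
  have hconv : ConvexOn ℝ (Set.Icc 0 A) ψ := by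
    apply MonotoneOn.convexOn_of_deriv (convex_Icc 0 A) hψcont
    · rw [interior_Icc]; exact hψC2.differentiableOn (by norm_num)
    · rw [interior_Icc]; exact hψ'mono
  have hsup : ∀ x t : ℝ, 0 ≤ x → 0 ≤ t → x + t ≤ A → ψ x + ψ t ≤ ψ (x + t) :=
    fun x t hx ht hxt => SpikeAux.superadd hA.le hconv hψ0 hx ht hxt
  have hoIcc : o ∈ Set.Icc (0:ℝ) A := ⟨ho0.le, by linarith⟩
  set δ : ℝ := ψ o with hδdef
  have hδ0 : 0 < δ := hψpos o ho0 (by linarith)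
  -- the truncated version of ψ, continuous on all of ℝ
  set F : ℝ → ℝ := fun x => ψ (min (max x o) A) with hFdef
  have hFcont : Continuous F := by
    apply hψcont.comp_continuous (by fun_prop)
    intro x
    exact ⟨le_min (le_trans ho0.le (le_max_right x o)) hA.le, min_le_right _ _⟩
  have hFeq : ∀ x ∈ Set.Icc o A, F x = ψ x := by
    intro x hx
    show ψ (min (max x o) A) = ψ x
    rw [max_eq_left hx.1, min_eq_left hx.2]
  -- the compact set K
  set K : Set (CSplit n) :=
    {z : CSplit n | z.ofLp.2.re ∈ Set.Icc o A ∧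
      z.ofLp.2.im ^ 2 + ‖z.ofLp.1‖ ^ 2 ≤ (F z.ofLp.2.re - δ) ^ 2} with hKdef
  have hcont2 : Continuous fun z : CSplit n => z.ofLp.2 :=
    continuous_snd.comp (WithLp.prodContinuousLinearEquiv 2 ℂ _ _).continuous
  have hcont1 : Continuous fun z : CSplit n => z.ofLp.1 :=
    continuous_fst.comp (WithLp.prodContinuousLinearEquiv 2 ℂ _ _).continuous
  have hKclosed : IsClosed K := by
    rw [hKdef, Set.setOf_and]
    apply IsClosed.inter
    · exact IsClosed.preimage (Complex.continuous_re.comp hcont2) isClosed_Icc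
    · apply isClosed_le
      · exact ((Complex.continuous_im.comp hcont2).pow 2).add ((hcont1.norm).pow 2)
      · exact ((hFcont.comp (Complex.continuous_re.comp hcont2)).sub continuous_const).pow 2
  have hψbd : ∀ x ∈ Set.Icc o A, 0 ≤ ψ x - δ ∧ ψ x - δ ≤ C * A ^ p := by
    intro x hx
    have hxIcc : x ∈ Set.Icc (0:ℝ) A := ⟨le_trans ho0.le hx.1, hx.2⟩
    constructor
    · have := hmono hoIcc hxIcc hx.1
      linarith
    · have h2 : ψ x ≤ C * x ^ p := (hψbound x hxIcc).2
      have h3 : x ^ p ≤ A ^ p := Real.rpow_le_rpow hxIcc.1 hxIcc.2 (by linarith)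
      nlinarith [mul_le_mul_of_nonneg_left h3 hC0.le]
  have hKcompact : IsCompact K := by
    apply Metric.isCompact_of_isClosed_isBounded hKclosed
    set e := WithLp.prodContinuousLinearEquiv 2 ℂ (EuclideanSpace ℂ (Fin (n-1))) ℂ with hedef
    have hsub : K ⊆ ⇑e.symm ''
        (Metric.closedBall 0 (C * A ^ p) ×ˢ Metric.closedBall 0 (A + C * A ^ p)) := by
      intro z hz
      obtain ⟨hz1, hz2⟩ := hz
      obtain ⟨hb1, hb2⟩ := hψbd z.ofLp.2.re hz1
      rw [hFeq z.ofLp.2.re hz1] at hz2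
      refine ⟨(z.ofLp.1, z.ofLp.2), ⟨?_, ?_⟩, rfl⟩
      · simp only [Metric.mem_closedBall, dist_zero_right]
        nlinarith [sq_nonneg z.ofLp.2.im, norm_nonneg z.ofLp.1]
      · simp only [Metric.mem_closedBall, dist_zero_right]
        have him : |z.ofLp.2.im| ≤ C * A ^ p := by
          nlinarith [norm_nonneg z.ofLp.1, sq_nonneg (‖z.ofLp.1‖), sq_abs z.ofLp.2.im, abs_nonneg z.ofLp.2.im]
        have hre : |z.ofLp.2.re| ≤ A := by
          rw [abs_of_nonneg (le_trans ho0.le hz1.1)]; exact hz1.2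
        calc ‖z.ofLp.2‖ ≤ |z.ofLp.2.re| + |z.ofLp.2.im| := Complex.norm_le_abs_re_add_abs_im z.ofLp.2
          _ ≤ A + C * A ^ p := add_le_add hre him
    apply Bornology.IsBounded.subset _ hsub
    exact (e.symm : (EuclideanSpace ℂ (Fin (n-1)) × ℂ) →L[ℂ] CSplit n).lipschitz.isBounded_image
      ((Metric.isBounded_closedBall).prod (Metric.isBounded_closedBall))
  refine ⟨a, ha0, h, hh0, B, hB0, K, hKcompact, ?_, ?_, ?_, ?_⟩
  · intro z hz
    exact hz.1.2
  · refine ⟨(WithLp.equiv 2 _).symm (0, (A:ℂ)), ⟨?_, ?_⟩⟩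
    · constructor
      · simp only [WithLp.equiv_symm_apply, WithLp.ofLp_toLp, Complex.ofReal_re]
        exact ⟨by linarith, le_rfl⟩
      · simp only [WithLp.equiv_symm_apply, WithLp.ofLp_toLp, Complex.ofReal_im]
        have : ‖(0 : EuclideanSpace ℂ (Fin (n-1)))‖ = 0 := norm_zero
        rw [this]
        norm_num
        exact sq_nonneg _
    · simp only [Set.mem_setOf_eq, WithLp.equiv_symm_apply, WithLp.ofLp_toLp, Complex.ofReal_re]
  · rintro z ⟨hzK, hzne⟩
    have hlt : z.ofLp.2.re < A := lt_of_le_of_ne hzK.1.2 (by simpa using hzne)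
    have h0 : 0 < z.ofLp.2.re := lt_of_lt_of_le ho0 hzK.1.1
    have hδψ : δ ≤ ψ z.ofLp.2.re := hmono hoIcc ⟨h0.le, hlt.le⟩ hzK.1.1
    have := hzK.2
    rw [hFeq z.ofLp.2.re hzK.1] at this
    exact ⟨h0, hlt, by nlinarith⟩
  · intro w' hw' ζ hζD hζB
    simp only [spikeDomain, Set.mem_setOf_eq, WithLp.equiv_symm_apply, WithLp.ofLp_toLp,
      WithLp.ofLp_toLp] at hζD
    obtain ⟨hζ1, hζ2, hζ3⟩ := hζD
    set S : ℝ := Real.sqrt (ζ.im ^ 2 + ‖w'‖ ^ 2) with hSdef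
    have hS0 : 0 ≤ S := Real.sqrt_nonneg _
    have hSsq : S ^ 2 = ζ.im ^ 2 + ‖w'‖ ^ 2 := Real.sq_sqrt (by positivity)
    have hζreIcc : ζ.re ∈ Set.Icc (0:ℝ) A := ⟨hζ1.le, hζ2.le⟩
    have hψζ : 0 < ψ ζ.re := hψpos _ hζ1 hζ2.le
    have hSψ : S < ψ ζ.re := by
      by_contra hc
      push_neg at hc
      have h9 : (ψ ζ.re) ^ 2 ≤ S ^ 2 := pow_le_pow_left₀ hψζ.le hc 2
      linarith [hSsq, hζ3]
    have hBIcc : B ∈ Set.Icc (0:ℝ) A := ⟨hB0.le, hBA⟩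
    have hAIcc : A ∈ Set.Icc (0:ℝ) A := ⟨hA.le, le_rfl⟩
    have hSB : S < ψ B := hSψ.trans_le (hmono hζreIcc hBIcc hζB)
    have hSA : S ≤ ψ A := le_of_lt (hSB.trans_le (hmono hBIcc hAIcc hBA))
    obtain ⟨x₀, hx₀mem, hx₀⟩ := intermediate_value_Icc hA.le hψcont
      (⟨by rw [hψ0]; exact hS0, hSA⟩ : S ∈ Set.Icc (ψ 0) (ψ A))
    have hφS : φ S = x₀ := by rw [← hx₀]; exact hφ x₀ hx₀mem
    have hx₀B : x₀ < B := by
      by_contra hc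
      push_neg at hc
      have := hmono hBIcc hx₀mem hc
      rw [hx₀] at this
      linarith
    rw [hφS]
    refine ⟨?_, ?_, ?_, ?_⟩
    · -- (1): translates of the model domain stay in the spike
      intro q hq
      obtain ⟨r, hr0, hra, hq1, hq2, hq3⟩ := SpikeAux.qbounds hα1.le ha1 haα hh0 hh1 hq
      have hrα0 : (0:ℝ) < r ^ α := Real.rpow_pos_of_pos hr0 α
      have ht0 : 0 < q.re := lt_of_lt_of_le (by positivity) hq1
      have htA : q.re ≤ A/2 := by
        have e1 : r ^ α ≤ (a⁻¹) ^ α := Real.rpow_le_rpow hr0.le hra.le hα0.le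
        have e2 : (a⁻¹) ^ α = a ^ (-α) := by
          rw [Real.rpow_neg ha0.le, Real.inv_rpow ha0.le]
        linarith [e1.trans_eq e2 |>.trans haA2, hq2]
      have hxtA : x₀ + q.re ≤ A := by linarith [hx₀mem.1]
      have key : |q.im| < ψ q.re := by
        have hrα10 : (0:ℝ) < r ^ (α + 1) := Real.rpow_pos_of_pos hr0 _
        have hsqrt2 : Real.sqrt 2 < 2 := by
          have h4 : Real.sqrt 4 = 2 := by
            rw [show (4:ℝ) = 2^2 by norm_num]
            exact Real.sqrt_sq (by norm_num)
          calc Real.sqrt 2 < Real.sqrt 4 := Real.sqrt_lt_sqrt (by norm_num) (by norm_num)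
            _ = 2 := h4
        have e2p : (2:ℝ) ^ (p+1) = 2 ^ p * 2 := Real.rpow_add_one two_ne_zero p
        have hh3 : h * (α * C * 2 ^ (p+1)) ≤ 1 := (le_div_iff₀ hden).mp hh2
        have hkey0 : Real.sqrt 2 * α * h < 1/(C * 2 ^ p) := by
          rw [lt_div_iff₀ (by positivity)]
          calc Real.sqrt 2 * α * h * (C * 2 ^ p)
              = Real.sqrt 2/2 * (h * (α * C * 2 ^ (p+1))) := by rw [e2p]; ring
            _ ≤ Real.sqrt 2/2 * 1 := by
                apply mul_le_mul_of_nonneg_left hh3 (by positivity)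
            _ < 1 := by linarith
        have step2 : Real.sqrt 2 * α * h * r ^ (α+1) < (1/(C * 2 ^ p)) * r ^ (α+1) :=
          mul_lt_mul_of_pos_right hkey0 hrα10
        have step3 : (1/(C * 2 ^ p)) * r ^ (α+1) ≤ (1/C) * q.re ^ p := by
          have e3 : (r ^ α / 2) ^ p = r ^ (α+1) / 2 ^ p := by
            rw [Real.div_rpow hrα0.le (by norm_num), ← Real.rpow_mul hr0.le, hαp]
          have e4 : (r ^ α / 2) ^ p ≤ q.re ^ p :=
            Real.rpow_le_rpow (by positivity) hq1 (by linarith)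
          calc (1/(C * 2 ^ p)) * r ^ (α+1) = (1/C) * ((r ^ α / 2) ^ p) := by
                rw [e3]; ring
            _ ≤ (1/C) * q.re ^ p := mul_le_mul_of_nonneg_left e4 (by positivity)
        have step4 : (1/C) * q.re ^ p ≤ ψ q.re :=
          (hψbound q.re ⟨ht0.le, by linarith⟩).1
        calc |q.im| ≤ Real.sqrt 2 * α * h * r ^ (α+1) := hq3
          _ < (1/(C * 2 ^ p)) * r ^ (α+1) := step2
          _ ≤ (1/C) * q.re ^ p := step3
          _ ≤ ψ q.re := step4
      have hsupx : ψ x₀ + ψ q.re ≤ ψ (x₀ + q.re) := hsup x₀ q.re hx₀mem.1 ht0.le hxtA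
      simp only [spikeDomain, Set.mem_setOf_eq, WithLp.equiv_symm_apply, WithLp.ofLp_toLp]
      have hre : ((x₀:ℂ) + (ζ.im:ℂ) * Complex.I + q).re = x₀ + q.re := by simp
      have him : ((x₀:ℂ) + (ζ.im:ℂ) * Complex.I + q).im = ζ.im + q.im := by simp
      rw [hre, him]
      have him2 : |ζ.im| ≤ S := by
        have := Real.sqrt_le_sqrt (le_add_of_nonneg_right (by positivity) :
          ζ.im ^ 2 ≤ ζ.im ^ 2 + ‖w'‖ ^ 2)
        rwa [Real.sqrt_sq_eq_abs] at this
      have hψxt : S + |q.im| < ψ (x₀ + q.re) := by rw [← hx₀]; linarith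
      refine ⟨by linarith [hx₀mem.1], by linarith [hx₀B, hBA4], ?_⟩
      have e0 : ζ.im * q.im ≤ S * |q.im| := by
        calc ζ.im * q.im ≤ |ζ.im * q.im| := le_abs_self _
          _ = |ζ.im| * |q.im| := abs_mul _ _
          _ ≤ S * |q.im| := mul_le_mul_of_nonneg_right him2 (abs_nonneg _)
      have e1 : (ζ.im + q.im) ^ 2 + ‖w'‖ ^ 2 = S ^ 2 + 2*(ζ.im*q.im) + |q.im| ^ 2 := by
        rw [hSsq, sq_abs]; ring
      have e2 : S ^ 2 + 2*(ζ.im*q.im) + |q.im| ^ 2 ≤ (S + |q.im|) ^ 2 := by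
        have e2' : (S + |q.im|) ^ 2 = S ^ 2 + 2*(S*|q.im|) + |q.im| ^ 2 := by ring
        rw [e2']
        linarith [e0]
      have e3 : (S + |q.im|) ^ 2 < ψ (x₀ + q.re) ^ 2 :=
        pow_lt_pow_left₀ hψxt (add_nonneg hS0 (abs_nonneg _)) two_ne_zero
      linarith
    · -- (2)
      linarith [hζB, hBo, ho0, hx₀mem.1]
    · -- (3)
      constructor
      · simp only [WithLp.equiv_symm_apply, WithLp.ofLp_toLp]
        have hre : ((x₀:ℂ) + (ζ.im:ℂ) * Complex.I + ((o:ℝ):ℂ)).re = x₀ + o := by simp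
        rw [hre]
        exact ⟨by linarith [hx₀mem.1], by linarith⟩
      · simp only [WithLp.equiv_symm_apply, WithLp.ofLp_toLp]
        have hre : ((x₀:ℂ) + (ζ.im:ℂ) * Complex.I + ((o:ℝ):ℂ)).re = x₀ + o := by simp
        have him : ((x₀:ℂ) + (ζ.im:ℂ) * Complex.I + ((o:ℝ):ℂ)).im = ζ.im := by simp
        rw [hre, him, hFeq (x₀ + o) ⟨by linarith [hx₀mem.1], by linarith⟩]
        have hsupo : ψ x₀ + ψ o ≤ ψ (x₀ + o) := hsup x₀ o hx₀mem.1 ho0.le (by linarith)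
        have hSδ : S + δ ≤ ψ (x₀ + o) := by rw [← hx₀]; exact hsupo
        calc ζ.im ^ 2 + ‖w'‖ ^ 2 = S ^ 2 := hSsq.symm
          _ ≤ (ψ (x₀ + o) - δ) ^ 2 := pow_le_pow_left₀ hS0 (by linarith) 2
    · -- (4)
      have hmem : (WithLp.equiv 2 _).symm (w', (x₀:ℂ) + (ζ.im:ℂ) * Complex.I)
          ∈ (spikeDomain n A ψ)ᶜ := by
        simp only [Set.mem_compl_iff, spikeDomain, Set.mem_setOf_eq,
          WithLp.equiv_symm_apply, WithLp.ofLp_toLp, not_and, not_lt]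
        intro _ _
        have hre : ((x₀:ℂ) + (ζ.im:ℂ) * Complex.I).re = x₀ := by simp
        have him : ((x₀:ℂ) + (ζ.im:ℂ) * Complex.I).im = ζ.im := by simp
        rw [hre, him, hx₀, ← hSsq]
      refine le_trans (Metric.infDist_le_dist_of_mem hmem) ?_
      have hd : dist ((WithLp.equiv 2 _).symm (w', ζ))
          ((WithLp.equiv 2 _).symm (w', (x₀:ℂ) + (ζ.im:ℂ) * Complex.I)) = |ζ.re - x₀| := by
        rw [WithLp.prod_dist_eq_add (by norm_num : 0 < (2:ENNReal).toReal)]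
        simp only [WithLp.equiv_symm_apply, WithLp.toLp_fst, WithLp.toLp_snd, dist_self]
        have hdζ : dist ζ ((x₀:ℂ) + (ζ.im:ℂ) * Complex.I) = |ζ.re - x₀| := by
          rw [Complex.dist_eq]
          have : ζ - ((x₀:ℂ) + (ζ.im:ℂ) * Complex.I) = ((ζ.re - x₀ : ℝ) : ℂ) := by
            apply Complex.ext <;> simp
          rw [this, Complex.norm_real, Real.norm_eq_abs]
        rw [hdζ]
        have h20 : ((2:ENNReal)).toReal = 2 := by norm_num
        rw [h20, Real.zero_rpow (by norm_num : (2:ℝ) ≠ 0), zero_add,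
          ← Real.rpow_mul (abs_nonneg _)]
        norm_num
      exact le_of_eq hd
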